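/- Second derivative identity and convexity of the spectral function: Let n ≥ 1 be an integer and k ≥ 1 an integer. For every x ∈ (0, n), γ_k″(x)/γ_k(x) = (γ_k′(x)/γ_k(x))² + Σ_{j=0}^{k−1} (2j+n)(n−2x) / ( (n+j−x)² (j+x)² ). In particular γ_k″(x) ≥ 0 for all x ∈ (0, n/2], so γ_k is convex on (0, n/2]. -/

import Mathlib

/-!
On `(0, n)` the functional equation `Γ(y + 1) = y Γ(y)` turns `γ_k` into the rational function
`∏_{j<k} (n + j - x) / (j + x)`, so `γ_k = exp L` with
`L x = ∑_{j<k} (log (n + j - x) - log (j + x))`. Differentiating twice gives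
`γ_k'' / γ_k = (L')² + L''`, and `L'' x = ∑_{j<k} ((j + x)⁻² - (n + j - x)⁻²)` is the stated
sum; each of its terms is nonnegative once `x ≤ n / 2`, because then `j + x ≤ n + j - x`.
-/

open Real

/-- The spectral function `γ_k(x) = Γ(x) Γ(n − x + k) / (Γ(n − x) Γ(x + k))`. -/
noncomputable def gammaFun (n k : ℕ) (x : ℝ) : ℝ :=
  Gamma x * Gamma ((n : ℝ) - x + k) / (Gamma ((n : ℝ) - x) * Gamma (x + k))

open Set Filter Topology Finset

section ExpComp

variable {f L L' L'' : ℝ → ℝ} {x : ℝ}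

theorem hasDerivAt_of_eventuallyEq_exp (hf : f =ᶠ[𝓝 x] fun y => exp (L y))
    (hL : HasDerivAt L (L' x) x) : HasDerivAt f (exp (L x) * L' x) x :=
  hL.exp.congr_of_eventuallyEq hf

theorem hasDerivAt_deriv_of_eventuallyEq_exp (hf : f =ᶠ[𝓝 x] fun y => exp (L y))
    (hL : ∀ᶠ y in 𝓝 x, HasDerivAt L (L' y) y) (hL' : HasDerivAt L' (L'' x) x) :
    HasDerivAt (deriv f) (exp (L x) * (L' x ^ 2 + L'' x)) x := by
  have hderiv : deriv f =ᶠ[𝓝 x] fun y => exp (L y) * L' y := by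
    filter_upwards [hf.eventuallyEq_nhds, hL] with y hfy hLy
    exact (hasDerivAt_of_eventuallyEq_exp hfy hLy).deriv
  exact ((hL.self_of_nhds.exp.mul hL').congr_of_eventuallyEq hderiv).congr_deriv (by ring)

theorem deriv_deriv_div_eq_of_eventuallyEq_exp (hf : f =ᶠ[𝓝 x] fun y => exp (L y))
    (hL : ∀ᶠ y in 𝓝 x, HasDerivAt L (L' y) y) (hL' : HasDerivAt L' (L'' x) x) :
    deriv (deriv f) x / f x = (deriv f x / f x) ^ 2 + L'' x := by
  rw [(hasDerivAt_deriv_of_eventuallyEq_exp hf hL hL').deriv,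
    (hasDerivAt_of_eventuallyEq_exp hf hL.self_of_nhds).deriv, hf.eq_of_nhds]
  field_simp

end ExpComp

theorem Real.Gamma_add_nat_eq_mul_prod {x : ℝ} (hx : 0 < x) (k : ℕ) :
    Gamma (x + k) = Gamma x * ∏ j ∈ range k, (x + j) := by
  induction k with
  | zero => simp
  | succ k ih =>
    rw [Nat.cast_succ, ← add_assoc, Gamma_add_one (by positivity), ih, prod_range_succ]
    ring

theorem hasDerivAt_log_sub_sub_log_add {a b x : ℝ} (ha : 0 < a - x) (hb : 0 < b + x) :
    HasDerivAt (fun y => log (a - y) - log (b + y)) (-(a - x)⁻¹ - (b + x)⁻¹) x :=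
  ((((hasDerivAt_id' x).const_sub a).log ha.ne').sub
    (((hasDerivAt_id' x).const_add b).log hb.ne')).congr_deriv (by ring)

theorem hasDerivAt_neg_inv_sub_sub_inv_add {a b x : ℝ} (ha : a - x ≠ 0) (hb : b + x ≠ 0) :
    HasDerivAt (fun y => -(a - y)⁻¹ - (b + y)⁻¹)
      ((a + b) * (a - b - 2 * x) / ((a - x) ^ 2 * (b + x) ^ 2)) x := by
  refine ((((hasDerivAt_id' x).const_sub a).inv ha).neg.sub
    (((hasDerivAt_id' x).const_add b).inv hb)).congr_deriv ?_
  field_simp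
  ring

theorem Ioc_zero_half_subset_Ioo (a : ℝ) : Ioc 0 (a / 2) ⊆ Ioo 0 a :=
  fun _ hx => ⟨hx.1, by linarith [hx.1, hx.2]⟩

noncomputable def logGammaFun (n k : ℕ) (x : ℝ) : ℝ :=
  ∑ j ∈ range k, (log (n + j - x) - log (j + x))

noncomputable def logGammaFunDeriv (n k : ℕ) (x : ℝ) : ℝ :=
  ∑ j ∈ range k, (-((n : ℝ) + j - x)⁻¹ - ((j : ℝ) + x)⁻¹)

noncomputable def logGammaFunDeriv2 (n k : ℕ) (x : ℝ) : ℝ :=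
  ∑ j ∈ range k,
    (2 * (j : ℝ) + n) * ((n : ℝ) - 2 * x) / (((n : ℝ) + j - x) ^ 2 * ((j : ℝ) + x) ^ 2)

section LogGammaFun

variable (n k : ℕ) {x : ℝ}

theorem gammaFun_eq_exp_logGammaFun (hx : x ∈ Ioo (0 : ℝ) n) :
    gammaFun n k x = exp (logGammaFun n k x) := by
  have hnx : 0 < (n : ℝ) - x := sub_pos.2 hx.2
  have hterm : ∀ j ∈ range k,
      exp (log (n + j - x) - log (j + x)) = ((n : ℝ) - x + j) / (x + j) := by
    intro j _
    rw [exp_sub, exp_log (by linarith [(j.cast_nonneg : (0 : ℝ) ≤ j)]),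
      exp_log (by linarith [hx.1, (j.cast_nonneg : (0 : ℝ) ≤ j)])]
    ring
  have hprod : 0 < ∏ j ∈ range k, (x + (j : ℝ)) :=
    prod_pos fun j _ => by linarith [hx.1, (j.cast_nonneg : (0 : ℝ) ≤ j)]
  rw [logGammaFun, exp_sum, prod_congr rfl hterm, prod_div_distrib, gammaFun,
    Gamma_add_nat_eq_mul_prod hx.1, Gamma_add_nat_eq_mul_prod hnx]
  field_simp [(Gamma_pos_of_pos hx.1).ne', (Gamma_pos_of_pos hnx).ne']

theorem gammaFun_eventuallyEq_exp_logGammaFun (hx : x ∈ Ioo (0 : ℝ) n) :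
    gammaFun n k =ᶠ[𝓝 x] fun y => exp (logGammaFun n k y) := by
  filter_upwards [isOpen_Ioo.mem_nhds hx] with y hy using gammaFun_eq_exp_logGammaFun n k hy

theorem hasDerivAt_logGammaFun (hx : x ∈ Ioo (0 : ℝ) n) :
    HasDerivAt (logGammaFun n k) (logGammaFunDeriv n k x) x := by
  unfold logGammaFun logGammaFunDeriv
  refine HasDerivAt.fun_sum fun j _ => hasDerivAt_log_sub_sub_log_add ?_ ?_ <;>
    linarith [hx.1, hx.2, (j.cast_nonneg : (0 : ℝ) ≤ j)]

theorem hasDerivAt_logGammaFunDeriv (hx : x ∈ Ioo (0 : ℝ) n) :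
    HasDerivAt (logGammaFunDeriv n k) (logGammaFunDeriv2 n k x) x := by
  unfold logGammaFunDeriv logGammaFunDeriv2
  refine HasDerivAt.fun_sum fun j _ => ?_
  refine (hasDerivAt_neg_inv_sub_sub_inv_add (a := n + j) (b := j) ?_ ?_).congr_deriv (by ring)
  all_goals linarith [hx.1, hx.2, (j.cast_nonneg : (0 : ℝ) ≤ j)]

theorem logGammaFunDeriv2_nonneg (hx : x ≤ n / 2) : 0 ≤ logGammaFunDeriv2 n k x :=
  sum_nonneg fun j _ => div_nonneg (mul_nonneg (by positivity) (by linarith)) (by positivity)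

theorem eventually_hasDerivAt_logGammaFun (hx : x ∈ Ioo (0 : ℝ) n) :
    ∀ᶠ y in 𝓝 x, HasDerivAt (logGammaFun n k) (logGammaFunDeriv n k y) y := by
  filter_upwards [isOpen_Ioo.mem_nhds hx] with y hy using hasDerivAt_logGammaFun n k hy

theorem hasDerivAt_gammaFun (hx : x ∈ Ioo (0 : ℝ) n) :
    HasDerivAt (gammaFun n k) (exp (logGammaFun n k x) * logGammaFunDeriv n k x) x :=
  hasDerivAt_of_eventuallyEq_exp (gammaFun_eventuallyEq_exp_logGammaFun n k hx)
    (hasDerivAt_logGammaFun n k hx)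

theorem hasDerivAt_deriv_gammaFun (hx : x ∈ Ioo (0 : ℝ) n) :
    HasDerivAt (deriv (gammaFun n k))
      (exp (logGammaFun n k x) * (logGammaFunDeriv n k x ^ 2 + logGammaFunDeriv2 n k x)) x :=
  hasDerivAt_deriv_of_eventuallyEq_exp (gammaFun_eventuallyEq_exp_logGammaFun n k hx)
    (eventually_hasDerivAt_logGammaFun n k hx) (hasDerivAt_logGammaFunDeriv n k hx)

theorem deriv_deriv_gammaFun_div_gammaFun (hx : x ∈ Ioo (0 : ℝ) n) :
    deriv (deriv (gammaFun n k)) x / gammaFun n k x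
      = (deriv (gammaFun n k) x / gammaFun n k x) ^ 2 + logGammaFunDeriv2 n k x :=
  deriv_deriv_div_eq_of_eventuallyEq_exp (gammaFun_eventuallyEq_exp_logGammaFun n k hx)
    (eventually_hasDerivAt_logGammaFun n k hx) (hasDerivAt_logGammaFunDeriv n k hx)

theorem deriv_deriv_gammaFun_nonneg (hx : x ∈ Ioc (0 : ℝ) (n / 2)) :
    0 ≤ deriv (deriv (gammaFun n k)) x := by
  rw [(hasDerivAt_deriv_gammaFun n k (Ioc_zero_half_subset_Ioo n hx)).deriv]
  have := logGammaFunDeriv2_nonneg n k hx.2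
  positivity

theorem convexOn_gammaFun : ConvexOn ℝ (Ioc (0 : ℝ) (n / 2)) (gammaFun n k) := by
  have hIoo : ∀ x ∈ interior (Ioc (0 : ℝ) (n / 2)), x ∈ Ioo (0 : ℝ) n :=
    fun _ hx => Ioc_zero_half_subset_Ioo n (interior_subset hx)
  refine convexOn_of_hasDerivWithinAt2_nonneg (convex_Ioc _ _)
    (fun x hx => (hasDerivAt_gammaFun n k (Ioc_zero_half_subset_Ioo n hx)).continuousAt
      |>.continuousWithinAt)
    (fun x hx => (hasDerivAt_gammaFun n k (hIoo x hx)).differentiableAt.hasDerivAt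
      |>.hasDerivWithinAt)
    (fun x hx => (hasDerivAt_deriv_gammaFun n k (hIoo x hx)).differentiableAt.hasDerivAt
      |>.hasDerivWithinAt)
    (fun x hx => deriv_deriv_gammaFun_nonneg n k (interior_subset hx))

end LogGammaFun

theorem gammaFun_second_deriv_general (n k : ℕ) :
    (∀ x ∈ Set.Ioo (0 : ℝ) (n : ℝ),
      deriv (deriv (gammaFun n k)) x / gammaFun n k x
        = (deriv (gammaFun n k) x / gammaFun n k x) ^ 2 +
            ∑ j ∈ Finset.range k,
              (2 * (j : ℝ) + n) * ((n : ℝ) - 2 * x) /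
                (((n : ℝ) + j - x) ^ 2 * ((j : ℝ) + x) ^ 2)) ∧
    (∀ x ∈ Set.Ioc (0 : ℝ) ((n : ℝ) / 2), 0 ≤ deriv (deriv (gammaFun n k)) x) ∧
    ConvexOn ℝ (Set.Ioc (0 : ℝ) ((n : ℝ) / 2)) (gammaFun n k) :=
  ⟨fun _ hx => deriv_deriv_gammaFun_div_gammaFun n k hx,
    fun _ hx => deriv_deriv_gammaFun_nonneg n k hx, convexOn_gammaFun n k⟩

/-- Second derivative identity and convexity of the spectral function. -/
theorem gammaFun_second_deriv (n k : ℕ) (hn : 1 ≤ n) (hk : 1 ≤ k) :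
    (∀ x ∈ Set.Ioo (0 : ℝ) (n : ℝ),
      deriv (deriv (gammaFun n k)) x / gammaFun n k x
        = (deriv (gammaFun n k) x / gammaFun n k x) ^ 2 +
            ∑ j ∈ Finset.range k,
              (2 * (j : ℝ) + n) * ((n : ℝ) - 2 * x) /
                (((n : ℝ) + j - x) ^ 2 * ((j : ℝ) + x) ^ 2)) ∧
    (∀ x ∈ Set.Ioc (0 : ℝ) ((n : ℝ) / 2), 0 ≤ deriv (deriv (gammaFun n k)) x) ∧
    ConvexOn ℝ (Set.Ioc (0 : ℝ) ((n : ℝ) / 2)) (gammaFun n k) :=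
  gammaFun_second_deriv_general n k
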